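/- Every super-biderivation φ of homogeneous degree on the centerless super-Virasoro algebra S(1/2) is an inner super-biderivation, i.e. there exists λ ∈ ℂ such that φ(x,y) = λ[x,y] for all x, y ∈ S(1/2). -/

import Mathlib

/-- The underlying vector space of the centerless super-Virasoro algebra `S(1/2)`:
the first factor records the coefficients of the even basis `{L_m | m ∈ ℤ}`, and the
second factor the coefficients of the odd basis `{G_k | k ∈ 1/2 + ℤ}`, where the
half-integer index `k = n + 1/2` is recorded by the integer `n`. -/
abbrev SVirHalf : Type := (ℤ →₀ ℂ) × (ℤ →₀ ℂ)

/-- The even basis vector `L_m` of `S(1/2)`. -/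
noncomputable def Lgen (m : ℤ) : SVirHalf := (Finsupp.single m 1, 0)

/-- The odd basis vector `G_{n+1/2}` of `S(1/2)`, indexed by `n ∈ ℤ`. -/
noncomputable def Ggen (n : ℤ) : SVirHalf := (0, Finsupp.single n 1)

/-- The super bracket of `S(1/2)`, determined by `[L_m, L_n] = (n-m)L_{m+n}`,
`[L_m, G_k] = (k - m/2)G_{m+k}`, `[G_k, L_m] = -(k - m/2)G_{m+k}` and
`[G_k, G_l] = 2L_{k+l}` for `m, n ∈ ℤ` and `k, l ∈ 1/2 + ℤ`, extended bilinearly;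
here the odd index `k = n + 1/2` is recorded by `n ∈ ℤ`, so that
`[L_m, G_{n+1/2}] = (n + 1/2 - m/2)G_{(m+n)+1/2}` and
`[G_{n+1/2}, G_{p+1/2}] = 2L_{n+p+1}`. -/
noncomputable def sbk (x y : SVirHalf) : SVirHalf :=
  ( x.1.sum (fun m a => y.1.sum fun n b =>
      Finsupp.single (m + n) (a * b * ((n : ℂ) - (m : ℂ))))
    + x.2.sum (fun n a => y.2.sum fun p b =>
      Finsupp.single (n + p + 1) (2 * (a * b))),
    x.1.sum (fun m a => y.2.sum fun n b =>
      Finsupp.single (m + n) (a * b * ((n : ℂ) + 1 / 2 - (m : ℂ) / 2)))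
    + x.2.sum (fun n a => y.1.sum fun m b =>
      Finsupp.single (m + n) (-(a * b * ((n : ℂ) + 1 / 2 - (m : ℂ) / 2)))) )

/-- The homogeneous components of `S(1/2)`: degree `0̄` is the even part (the span of
the `L_m`), degree `1̄` is the odd part (the span of the `G_k`). -/
def grad : ZMod 2 → Set SVirHalf := fun i =>
  if i = 0 then {x | x.2 = 0} else {x | x.1 = 0}

/-- A super-biderivation of homogeneous degree `d` of `S(1/2)`: a bilinear map
`φ : S(1/2) × S(1/2) → S(1/2)` with `φ(L_α, L_β) ⊆ L_{α+β+d}`, skew-supersymmetric,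
`φ(x,y) = -(-1)^{|x||y|}φ(y,x)`, and satisfying
`φ([x,y],z) = (-1)^{d|x|}[x,φ(y,z)] + (-1)^{|y||z|}[φ(x,z),y]` and
`φ(x,[y,z]) = [φ(x,y),z] + (-1)^{(d+|x|)|y|}[y,φ(x,z)]` for homogeneous `x, y, z`. -/
def IsSuperBiderivationSV (d : ZMod 2) (φ : SVirHalf →ₗ[ℂ] SVirHalf →ₗ[ℂ] SVirHalf) : Prop :=
  (∀ (α β : ZMod 2) (x y : SVirHalf), x ∈ grad α → y ∈ grad β →
      φ x y ∈ grad (α + β + d)) ∧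
  (∀ (α β : ZMod 2) (x y : SVirHalf), x ∈ grad α → y ∈ grad β →
      φ x y = (-(-1 : ℂ) ^ (α * β).val) • φ y x) ∧
  (∀ (α β γ : ZMod 2) (x y z : SVirHalf), x ∈ grad α → y ∈ grad β → z ∈ grad γ →
      φ (sbk x y) z =
        ((-1 : ℂ) ^ (d * α).val) • sbk x (φ y z) +
          ((-1 : ℂ) ^ (β * γ).val) • sbk (φ x z) y) ∧
  (∀ (α β γ : ZMod 2) (x y z : SVirHalf), x ∈ grad α → y ∈ grad β → z ∈ grad γ →
      φ x (sbk y z) =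
        sbk (φ x y) z + ((-1 : ℂ) ^ ((d + α) * β).val) • sbk y (φ x z))

lemma mem_grad_zero {x : SVirHalf} : x ∈ grad 0 ↔ x.2 = 0 := by simp [grad]

lemma mem_grad_one {x : SVirHalf} : x ∈ grad 1 ↔ x.1 = 0 := by simp [grad]

lemma Lgen_mem (m : ℤ) : Lgen m ∈ grad 0 := mem_grad_zero.mpr rfl

lemma Ggen_mem (n : ℤ) : Ggen n ∈ grad 1 := mem_grad_one.mpr rfl

/-- generic bilinear building block -/
noncomputable def bl (σ : ℤ → ℤ → ℤ) (C : ℤ → ℤ → ℂ) (u v : ℤ →₀ ℂ) : ℤ →₀ ℂ :=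
  u.sum fun m a => v.sum fun n b => Finsupp.single (σ m n) (a * b * C m n)

lemma bl_add_left (σ C) (u u' v : ℤ →₀ ℂ) :
    bl σ C (u + u') v = bl σ C u v + bl σ C u' v := by
  unfold bl
  rw [Finsupp.sum_add_index' (by intro i; simp) (by
    intro i b c
    rw [← Finsupp.sum_add]
    apply Finsupp.sum_congr
    intro j _
    rw [← Finsupp.single_add]
    congr 1
    ring)]

lemma bl_smul_left (σ C) (t : ℂ) (u v : ℤ →₀ ℂ) :
    bl σ C (t • u) v = t • bl σ C u v := by
  unfold bl
  rw [Finsupp.sum_smul_index' (by intro i; simp), Finsupp.smul_sum]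
  apply Finsupp.sum_congr
  intro i _
  rw [Finsupp.smul_sum]
  apply Finsupp.sum_congr
  intro j _
  rw [Finsupp.smul_single]
  simp only [smul_eq_mul]
  congr 1
  ring

lemma bl_add_right (σ C) (u v v' : ℤ →₀ ℂ) :
    bl σ C u (v + v') = bl σ C u v + bl σ C u v' := by
  unfold bl
  rw [← Finsupp.sum_add]
  apply Finsupp.sum_congr
  intro i _
  rw [Finsupp.sum_add_index' (by intro j; simp) (by
    intro j b c
    rw [← Finsupp.single_add]
    congr 1
    ring)]

lemma bl_smul_right (σ C) (t : ℂ) (u v : ℤ →₀ ℂ) :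
    bl σ C u (t • v) = t • bl σ C u v := by
  unfold bl
  rw [Finsupp.smul_sum]
  apply Finsupp.sum_congr
  intro i _
  rw [Finsupp.sum_smul_index' (by intro j; simp), Finsupp.smul_sum]
  apply Finsupp.sum_congr
  intro j _
  rw [Finsupp.smul_single]
  simp only [smul_eq_mul]
  congr 1
  ring

lemma sbk_eq_bl (x y : SVirHalf) :
    sbk x y = (bl (fun m n => m + n) (fun m n => (n : ℂ) - m) x.1 y.1
        + bl (fun n p => n + p + 1) (fun _ _ => 2) x.2 y.2,
      bl (fun m n => m + n) (fun m n => (n : ℂ) + 1/2 - m/2) x.1 y.2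
        + bl (fun n m => m + n) (fun n m => -((n : ℂ) + 1/2 - m/2)) x.2 y.1) := by
  unfold sbk bl
  refine Prod.ext ?_ ?_ <;>
  · simp only
    congr 1 <;>
    · apply Finsupp.sum_congr
      intro i _
      apply Finsupp.sum_congr
      intro j _
      congr 1
      ring

lemma sbk_add_left' (x x' y : SVirHalf) : sbk (x + x') y = sbk x y + sbk x' y := by
  simp only [sbk_eq_bl, Prod.fst_add, Prod.snd_add, bl_add_left, Prod.mk_add_mk]
  congr 1 <;> abel

lemma sbk_smul_left' (t : ℂ) (x y : SVirHalf) : sbk (t • x) y = t • sbk x y := by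
  simp only [sbk_eq_bl, Prod.smul_fst, Prod.smul_snd, bl_smul_left, Prod.smul_mk, smul_add]

lemma sbk_add_right' (x y y' : SVirHalf) : sbk x (y + y') = sbk x y + sbk x y' := by
  simp only [sbk_eq_bl, Prod.fst_add, Prod.snd_add, bl_add_right, Prod.mk_add_mk]
  congr 1 <;> abel

lemma sbk_smul_right' (t : ℂ) (x y : SVirHalf) : sbk x (t • y) = t • sbk x y := by
  simp only [sbk_eq_bl, Prod.smul_fst, Prod.smul_snd, bl_smul_right, Prod.smul_mk, smul_add]

noncomputable def sbkBil : SVirHalf →ₗ[ℂ] SVirHalf →ₗ[ℂ] SVirHalf :=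
  LinearMap.mk₂ ℂ sbk sbk_add_left' sbk_smul_left' sbk_add_right' sbk_smul_right'

@[simp] lemma sbkBil_apply (x y : SVirHalf) : sbkBil x y = sbk x y := rfl

lemma sbk_LL (m n : ℤ) : sbk (Lgen m) (Lgen n) = ((n : ℂ) - m) • Lgen (m + n) := by
  unfold sbk Lgen
  simp only [Finsupp.sum_zero_index, Finsupp.sum_single_index, Prod.smul_mk, smul_zero]
  refine Prod.ext ?_ ?_
  · simp only [add_zero]
    rw [Finsupp.sum_single_index (by simp), Finsupp.sum_single_index (by simp),
      Finsupp.smul_single, smul_eq_mul]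
    congr 1
    ring
  · simp [Finsupp.sum_zero_index]

lemma sbk_LG (m n : ℤ) : sbk (Lgen m) (Ggen n) = ((n : ℂ) + 1/2 - m/2) • Ggen (m + n) := by
  unfold sbk Lgen Ggen
  refine Prod.ext ?_ ?_
  · simp [Finsupp.sum_zero_index, Finsupp.sum_single_index]
  · simp only [Prod.smul_mk, smul_zero]
    rw [Finsupp.sum_zero_index, Finsupp.sum_single_index (by simp), add_zero,
      Finsupp.sum_single_index (by simp), Finsupp.smul_single, smul_eq_mul]
    congr 1
    ring

lemma sbk_GL (m n : ℤ) : sbk (Ggen n) (Lgen m) = (-((n : ℂ) + 1/2 - m/2)) • Ggen (m + n) := by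
  unfold sbk Lgen Ggen
  refine Prod.ext ?_ ?_
  · simp [Finsupp.sum_zero_index, Finsupp.sum_single_index]
  · simp only [Prod.smul_mk, smul_zero]
    rw [Finsupp.sum_zero_index, Finsupp.sum_single_index (by simp), zero_add,
      Finsupp.sum_single_index (by simp), Finsupp.smul_single, smul_eq_mul]
    congr 1
    ring

lemma sbk_GG (n p : ℤ) : sbk (Ggen n) (Ggen p) = (2 : ℂ) • Lgen (n + p + 1) := by
  unfold sbk Ggen Lgen
  refine Prod.ext ?_ ?_
  · simp only [Prod.smul_mk, smul_zero]
    rw [Finsupp.sum_zero_index, Finsupp.sum_single_index (by simp), zero_add,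
      Finsupp.sum_single_index (by simp), Finsupp.smul_single, smul_eq_mul]
    congr 1
    ring
  · simp [Finsupp.sum_zero_index, Finsupp.sum_single_index]

lemma sum_single_eval (f : ℤ →₀ ℂ) (g : ℤ → ℂ → ℂ) (hg : ∀ n, g n 0 = 0) (k : ℤ) :
    (f.sum fun n b => Finsupp.single n (g n b)) k = g k (f k) := by
  classical
  rw [Finsupp.sum_apply, Finsupp.sum]
  simp only [Finsupp.single_apply]
  rw [Finset.sum_ite_eq' f.support k fun n => g n (f n)]
  by_cases h : k ∈ f.support
  · simp [h]
  · simp [h, Finsupp.notMem_support_iff.mp h, hg]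

lemma sbk_L0 (z : SVirHalf) : sbk (Lgen 0) z =
    (z.1.sum fun n b => Finsupp.single n (b * n),
     z.2.sum fun n b => Finsupp.single n (b * ((n : ℂ) + 1/2))) := by
  unfold sbk Lgen
  refine Prod.ext ?_ ?_
  · simp only [Finsupp.sum_zero_index, add_zero]
    rw [Finsupp.sum_single_index (by simp [Finsupp.sum])]
    apply Finsupp.sum_congr
    intro i _
    rw [zero_add]
    congr 1
    ring
  · simp only [Finsupp.sum_zero_index, add_zero]
    rw [Finsupp.sum_single_index (by simp [Finsupp.sum])]
    apply Finsupp.sum_congr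
    intro i _
    rw [zero_add]
    congr 1
    ring

lemma sbk_L0_fst (z : SVirHalf) (k : ℤ) : (sbk (Lgen 0) z).1 k = z.1 k * k := by
  rw [sbk_L0]
  exact sum_single_eval _ _ (by intro n; ring) k

lemma sbk_L0_snd (z : SVirHalf) (k : ℤ) : (sbk (Lgen 0) z).2 k = z.2 k * ((k : ℂ) + 1/2) := by
  rw [sbk_L0]
  exact sum_single_eval _ _ (by intro n; ring) k

lemma eigen_L (z : SVirHalf) (m : ℤ) (h : sbk (Lgen 0) z = (m : ℂ) • z) :
    z = z.1 m • Lgen m := by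
  have h1 : ∀ k, z.1 k * k = (m : ℂ) * z.1 k := by
    intro k
    have := congrArg (fun w : SVirHalf => w.1 k) h
    simpa [sbk_L0_fst, Finsupp.smul_apply, smul_eq_mul] using this
  have h2 : ∀ k, z.2 k * ((k : ℂ) + 1/2) = (m : ℂ) * z.2 k := by
    intro k
    have := congrArg (fun w : SVirHalf => w.2 k) h
    simpa [sbk_L0_snd, Finsupp.smul_apply, smul_eq_mul] using this
  have hz2 : z.2 = 0 := by
    ext k
    have hk : ((k : ℂ) + 1/2) - m ≠ 0 := by
      intro hc
      have : ((2*k+1 : ℤ) : ℂ) = ((2*m : ℤ) : ℂ) := by push_cast; linear_combination 2*hc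
      have := Int.cast_injective (α := ℂ) this
      omega
    have : z.2 k * (((k : ℂ) + 1/2) - m) = 0 := by
      have := h2 k; ring_nf; ring_nf at this; linear_combination this
    simpa [Finsupp.coe_zero, Pi.zero_apply] using (mul_eq_zero.mp this).resolve_right hk
  have hz1 : ∀ k, k ≠ m → z.1 k = 0 := by
    intro k hk
    have hk' : ((k : ℂ) - m) ≠ 0 := by
      intro hc
      have : ((k : ℤ) : ℂ) = ((m : ℤ) : ℂ) := by push_cast; linear_combination hc
      exact hk (Int.cast_injective (α := ℂ) this)
    have : z.1 k * ((k : ℂ) - m) = 0 := by linear_combination h1 k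
    exact (mul_eq_zero.mp this).resolve_right hk'
  refine Prod.ext ?_ ?_
  · ext k
    by_cases hk : k = m
    · subst hk; simp [Lgen, Finsupp.single_apply]
    · simp [Lgen, Finsupp.single_apply, Ne.symm hk, hz1 k hk]
  · simp [Lgen, hz2]

lemma eigen_G (z : SVirHalf) (n : ℤ) (h : sbk (Lgen 0) z = ((n : ℂ) + 1/2) • z) :
    z = z.2 n • Ggen n := by
  have h1 : ∀ k, z.1 k * k = ((n : ℂ) + 1/2) * z.1 k := by
    intro k
    have := congrArg (fun w : SVirHalf => w.1 k) h
    simpa [sbk_L0_fst, Finsupp.smul_apply, smul_eq_mul] using this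
  have h2 : ∀ k, z.2 k * ((k : ℂ) + 1/2) = ((n : ℂ) + 1/2) * z.2 k := by
    intro k
    have := congrArg (fun w : SVirHalf => w.2 k) h
    simpa [sbk_L0_snd, Finsupp.smul_apply, smul_eq_mul] using this
  have hz1 : z.1 = 0 := by
    ext k
    have hk : ((k : ℂ) - ((n : ℂ) + 1/2)) ≠ 0 := by
      intro hc
      have : ((2*k : ℤ) : ℂ) = ((2*n+1 : ℤ) : ℂ) := by push_cast; linear_combination 2*hc
      have := Int.cast_injective (α := ℂ) this
      omega
    have : z.1 k * ((k : ℂ) - ((n : ℂ) + 1/2)) = 0 := by linear_combination h1 k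
    simpa using (mul_eq_zero.mp this).resolve_right hk
  have hz2 : ∀ k, k ≠ n → z.2 k = 0 := by
    intro k hk
    have hk' : ((k : ℂ) - n) ≠ 0 := by
      intro hc
      have : ((k : ℤ) : ℂ) = ((n : ℤ) : ℂ) := by push_cast; linear_combination hc
      exact hk (Int.cast_injective (α := ℂ) this)
    have : z.2 k * ((k : ℂ) - n) = 0 := by linear_combination h2 k
    exact (mul_eq_zero.mp this).resolve_right hk'
  refine Prod.ext ?_ ?_
  · simp [Ggen, hz1]
  · ext k
    by_cases hk : k = n
    · subst hk; simp [Ggen, Finsupp.single_apply]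
    · simp [Ggen, Finsupp.single_apply, Ne.symm hk, hz2 k hk]

lemma Lgen_smul_cancel {s t : ℂ} {m : ℤ} (h : s • Lgen m = t • Lgen m) : s = t := by
  have := congrArg (fun w : SVirHalf => w.1 m) h
  simpa [Lgen, Finsupp.single_apply] using this

lemma Ggen_smul_cancel {s t : ℂ} {n : ℤ} (h : s • Ggen n = t • Ggen n) : s = t := by
  have := congrArg (fun w : SVirHalf => w.2 n) h
  simpa [Ggen, Finsupp.single_apply] using this

lemma hom_ext {M : Type*} [AddCommGroup M] [Module ℂ M] (f g : SVirHalf →ₗ[ℂ] M)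
    (hL : ∀ m, f (Lgen m) = g (Lgen m)) (hG : ∀ n, f (Ggen n) = g (Ggen n)) : f = g := by
  apply LinearMap.ext
  intro x
  have key1 : ∀ u : ℤ →₀ ℂ, f (u, 0) = g (u, 0) := by
    intro u
    induction u using Finsupp.induction₂ with
    | zero => simp [show ((0 : ℤ →₀ ℂ), (0 : ℤ →₀ ℂ)) = (0 : SVirHalf) from rfl]
    | add_single a b v _ _ ih =>
      have e1 : ((v + Finsupp.single a b : ℤ →₀ ℂ), (0 : ℤ →₀ ℂ))
          = ((v, 0) : SVirHalf) + (Finsupp.single a b, 0) := by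
        simp [Prod.ext_iff]
      have e2 : ((Finsupp.single a b, 0) : SVirHalf) = b • Lgen a := by
        unfold Lgen
        rw [Prod.smul_mk, smul_zero, Finsupp.smul_single, smul_eq_mul, mul_one]
      rw [e1, map_add, map_add, ih, e2, map_smul, map_smul, hL]
  have key2 : ∀ u : ℤ →₀ ℂ, f (0, u) = g (0, u) := by
    intro u
    induction u using Finsupp.induction₂ with
    | zero => simp [show ((0 : ℤ →₀ ℂ), (0 : ℤ →₀ ℂ)) = (0 : SVirHalf) from rfl]
    | add_single a b v _ _ ih =>
      have e1 : (((0 : ℤ →₀ ℂ), (v + Finsupp.single a b : ℤ →₀ ℂ)) : SVirHalf)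
          = ((0, v) : SVirHalf) + (0, Finsupp.single a b) := by
        simp [Prod.ext_iff]
      have e2 : (((0 : ℤ →₀ ℂ), Finsupp.single a b) : SVirHalf) = b • Ggen a := by
        unfold Ggen
        rw [Prod.smul_mk, smul_zero, Finsupp.smul_single, smul_eq_mul, mul_one]
      rw [e1, map_add, map_add, ih, e2, map_smul, map_smul, hG]
  have hx : x = ((x.1, 0) : SVirHalf) + (0, x.2) := by simp [Prod.ext_iff]
  rw [hx, map_add, map_add, key1, key2]

lemma sbk_zero_left (y : SVirHalf) : sbk 0 y = 0 := by
  rw [← sbkBil_apply, map_zero]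
  rfl

lemma sbk_zero_right (x : SVirHalf) : sbk x 0 = 0 := by
  rw [← sbkBil_apply]
  exact (sbkBil x).map_zero

lemma sbk_neg_left (x y : SVirHalf) : sbk (-x) y = -sbk x y := by
  rw [← sbkBil_apply, map_neg, LinearMap.neg_apply, sbkBil_apply]

lemma sbk_sub_right (x y y' : SVirHalf) : sbk x (y - y') = sbk x y - sbk x y' := by
  rw [← sbkBil_apply, (sbkBil x).map_sub, sbkBil_apply, sbkBil_apply]

@[simp] lemma Lgen_fst_same (q : ℤ) : (Lgen q).1 q = 1 := by simp [Lgen]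

@[simp] lemma Lgen_snd (q : ℤ) : (Lgen q).2 = 0 := rfl

@[simp] lemma Ggen_snd_same (q : ℤ) : (Ggen q).2 q = 1 := by simp [Ggen]

@[simp] lemma Ggen_fst (q : ℤ) : (Ggen q).1 = 0 := rfl

lemma eq_zero_of_eq_neg_one_smul {M : Type*} [AddCommGroup M] [Module ℂ M] {x : M}
    (h : x = (-1 : ℂ) • x) : x = 0 := by
  have h2 : ((1 : ℂ) - (-1)) • x = 0 := by
    rw [sub_smul, one_smul, ← h, sub_self]
  simpa using (smul_eq_zero.mp h2).resolve_left (by norm_num)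


/-- every super-biderivation of homogeneous degree on the centerless
super-Virasoro algebra `S(1/2)` is inner: there is `λ ∈ ℂ` with `φ(x,y) = λ[x,y]`
for all `x, y ∈ S(1/2)`. -/
theorem superBiderivation_SVirHalf_is_inner (d : ZMod 2)
    (φ : SVirHalf →ₗ[ℂ] SVirHalf →ₗ[ℂ] SVirHalf) (hφ : IsSuperBiderivationSV d φ) :
    ∃ lam : ℂ, ∀ x y : SVirHalf, φ x y = lam • sbk x y := by
  obtain ⟨hgrad, hskew, hR3, hR4⟩ := hφ
  have h00 : φ (Lgen 0) (Lgen 0) = 0 := by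
    have h := hskew 0 0 (Lgen 0) (Lgen 0) (Lgen_mem 0) (Lgen_mem 0)
    have e : (-(-1 : ℂ) ^ ((0 : ZMod 2) * 0).val) = -1 := by norm_num
    rw [e] at h
    exact eq_zero_of_eq_neg_one_smul h
  have sbkL0L : ∀ m : ℤ, sbk (Lgen 0) (Lgen m) = (m : ℂ) • Lgen m := by
    intro m
    rw [sbk_LL]
    norm_num
  have sbkL0G : ∀ n : ℤ, sbk (Lgen 0) (Ggen n) = ((n : ℂ) + 1/2) • Ggen n := by
    intro n
    rw [sbk_LG]
    norm_num
  -- eigenvalue equation for φ (Lgen 0) b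
  have hEig : ∀ (γ : ZMod 2) (b : SVirHalf) (w : ℂ), b ∈ grad γ → sbk (Lgen 0) b = w • b →
      sbk (Lgen 0) (φ (Lgen 0) b) = w • (φ (Lgen 0) b) := by
    intro γ b w hb hw
    have h := hR4 0 0 γ (Lgen 0) (Lgen 0) b (Lgen_mem 0) (Lgen_mem 0) hb
    rw [hw, map_smul, h00, sbk_zero_left] at h
    have hs : ((d + 0) * 0).val = 0 := by simp
    rw [hs, pow_zero, one_smul, zero_add] at h
    exact h.symm
  have hKL0 : ∀ m : ℤ, φ (Lgen 0) (Lgen m) = ((φ (Lgen 0) (Lgen m)).1 m) • Lgen m :=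
    fun m => eigen_L _ m (hEig 0 (Lgen m) (m : ℂ) (Lgen_mem m) (sbkL0L m))
  have hKG0 : ∀ n : ℤ, φ (Lgen 0) (Ggen n) = ((φ (Lgen 0) (Ggen n)).2 n) • Ggen n :=
    fun n => eigen_G _ n (hEig 1 (Ggen n) _ (Ggen_mem n) (sbkL0G n))
  set κ : ℤ → ℂ := fun m => (φ (Lgen 0) (Lgen m)).1 m with hκ
  set μ : ℤ → ℂ := fun n => (φ (Lgen 0) (Ggen n)).2 n with hμ
  have hκ0 : κ 0 = 0 := by
    rw [hκ]
    simp [h00]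
  have hrel : ∀ n p : ℤ, (2 : ℂ) * κ (n+p+1) =
      μ n * 2 + ((-1 : ℂ) ^ ((d + 0) * 1).val) * (μ p * 2) := by
    intro n p
    have h := hR4 0 1 1 (Lgen 0) (Ggen n) (Ggen p) (Lgen_mem 0) (Ggen_mem n) (Ggen_mem p)
    rw [sbk_GG, map_smul, hKL0 (n+p+1), hKG0 n, hKG0 p, sbk_smul_left', sbk_smul_right',
      sbk_GG] at h
    have h2 := congrArg (fun z : SVirHalf => z.1 (n+p+1)) h
    simp only [Prod.smul_fst, Finsupp.smul_apply, smul_eq_mul, Prod.fst_add,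
      Finsupp.add_apply, Lgen_fst_same] at h2
    simp only [hκ, hμ]
    linear_combination h2
  obtain ⟨c, hKL, hKG⟩ : ∃ c : ℂ,
      (∀ m : ℤ, φ (Lgen 0) (Lgen m) = ((m : ℂ) * c) • Lgen m) ∧
      (∀ n : ℤ, φ (Lgen 0) (Ggen n) = (((n : ℂ) + 1/2) * c) • Ggen n) := by
    rcases (by decide : ∀ e : ZMod 2, e = 0 ∨ e = 1) d with hd | hd
    · -- d = 0
      have hsgn : ((d + 0) * 1 : ZMod 2).val = 0 := by rw [hd]; decide
      have hrel0 : ∀ n p : ℤ, κ (n + p + 1) = μ n + μ p := by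
        intro n p
        have h := hrel n p
        rw [hsgn, pow_zero] at h
        linear_combination h / 2
      have hstep : ∀ k : ℤ, μ (k + 1) = μ k + (μ 1 - μ 0) := by
        intro k
        have h1 := hrel0 k 1
        have h2 := hrel0 (k + 1) 0
        have e : k + 1 + 0 + 1 = k + 1 + 1 := by ring
        rw [e] at h2
        linear_combination h1 - h2
      have hμlin : ∀ n : ℤ, μ n = μ 0 + (n : ℂ) * (μ 1 - μ 0) := by
        intro n
        induction n using Int.induction_on with
        | zero => simp
        | succ k ih =>
          have h := hstep k
          push_cast
          push_cast at ih
          rw [h, ih]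
          ring
        | pred k ih =>
          have h := hstep (-(k : ℤ) - 1)
          have e : -(k : ℤ) - 1 + 1 = -(k : ℤ) := by ring
          rw [e] at h
          push_cast
          push_cast at ih
          linear_combination ih - h
      have hμ0 : μ 0 + μ (-1) = 0 := by
        have h := hrel0 0 (-1)
        have e : (0 : ℤ) + (-1) + 1 = 0 := by ring
        rw [e, hκ0] at h
        linear_combination -h
      have hδ : μ 0 * 2 = μ 1 - μ 0 := by
        have h3 := hμlin (-1)
        push_cast at h3
        linear_combination hμ0 - h3
      refine ⟨μ 1 - μ 0, fun m => ?_, fun n => ?_⟩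
      · rw [hKL0 m]
        congr 1
        show κ m = (m : ℂ) * (μ 1 - μ 0)
        have h1 := hrel0 0 (m - 1)
        have e : (0 : ℤ) + (m - 1) + 1 = m := by ring
        rw [e] at h1
        have h2 := hμlin (m - 1)
        push_cast at h2
        linear_combination h1 + h2 + hδ
      · rw [hKG0 n]
        congr 1
        show μ n = ((n : ℂ) + 1/2) * (μ 1 - μ 0)
        have h2 := hμlin n
        push_cast at h2
        linear_combination h2 + hδ / 2
    · -- d = 1
      refine ⟨0, fun m => ?_, fun n => ?_⟩
      · have hmem := hgrad 0 0 (Lgen 0) (Lgen m) (Lgen_mem 0) (Lgen_mem m)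
        have e : ((0 : ZMod 2) + 0 + d) = 1 := by rw [hd]; decide
        rw [e] at hmem
        have h1 := mem_grad_one.mp hmem
        rw [hKL0 m]
        have hz : ((φ (Lgen 0)) (Lgen m)).1 m = 0 := by simp [h1]
        rw [hz]
        norm_num
      · have hmem := hgrad 0 1 (Lgen 0) (Ggen n) (Lgen_mem 0) (Ggen_mem n)
        have e : ((0 : ZMod 2) + 1 + d) = 0 := by rw [hd]; decide
        rw [e] at hmem
        have h1 := mem_grad_zero.mp hmem
        rw [hKG0 n]
        have hz : ((φ (Lgen 0)) (Ggen n)).2 n = 0 := by simp [h1]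
        rw [hz]
        norm_num
  have hswap : ∀ (β : ZMod 2) (b : SVirHalf), b ∈ grad β →
      φ b (Lgen 0) = -(φ (Lgen 0) b) := by
    intro β b hb
    have h := hskew β 0 b (Lgen 0) hb (Lgen_mem 0)
    have e : (-(-1 : ℂ) ^ ((β : ZMod 2) * 0).val) = -1 := by
      rw [mul_zero]
      norm_num
    rw [e] at h
    rw [h]
    exact neg_one_smul ℂ ((φ (Lgen 0)) b)
  have main : ∀ (β γ : ZMod 2) (b b' : SVirHalf) (w w' : ℂ),
      b ∈ grad β → b' ∈ grad γ →
      sbk (Lgen 0) b = w • b → sbk (Lgen 0) b' = w' • b' →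
      φ (Lgen 0) b = (w * c) • b → φ (Lgen 0) b' = (w' * c) • b' →
      sbk b' b = (-(-1 : ℂ) ^ (β * γ).val) • sbk b b' →
      ((w - w') • (φ b b' - c • sbk b b') = 0 ∧
        sbk (Lgen 0) (φ b b') = w' • φ b b' + (w * c) • sbk b b') := by
    intro β γ b b' w w' hb hb' hwb hwb' hKb hKb' hsk
    have hbL0 : φ b (Lgen 0) = -((w * c) • b) := by
      rw [hswap β b hb, hKb]
    have hB := hR4 β 0 γ b (Lgen 0) b' hb (Lgen_mem 0) hb'
    rw [hwb', map_smul, hbL0, sbk_neg_left, sbk_smul_left'] at hB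
    have hs : ((d + β) * 0).val = 0 := by simp
    rw [hs, pow_zero, one_smul] at hB
    have hBB : sbk (Lgen 0) (φ b b') = w' • φ b b' + (w * c) • sbk b b' := by
      rw [hB]
      abel
    refine ⟨?_, hBB⟩
    have hA := hR3 0 β γ (Lgen 0) b b' (Lgen_mem 0) hb hb'
    rw [hwb, map_smul, LinearMap.smul_apply, hKb', sbk_smul_left', hsk] at hA
    have hs2 : (d * 0).val = 0 := by simp
    rw [hs2, pow_zero, one_smul, hBB] at hA
    have hsq : ((-1 : ℂ) ^ (β * γ).val) * (-(-1 : ℂ) ^ (β * γ).val) = -1 := by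
      rw [mul_neg, ← pow_add, Even.neg_one_pow ⟨(β * γ).val, rfl⟩]
    rw [smul_smul, smul_smul] at hA
    have e : (((-1 : ℂ) ^ (β * γ).val * (w' * c)) * (-(-1 : ℂ) ^ (β * γ).val)) = -(w' * c) := by
      linear_combination (w' * c) * hsq
    rw [e] at hA
    linear_combination (norm := module) hA
  have swapLL : ∀ m m' : ℤ, sbk (Lgen m') (Lgen m)
      = (-(-1 : ℂ) ^ ((0 : ZMod 2) * 0).val) • sbk (Lgen m) (Lgen m') := by
    intro m m'
    have e : (-(-1 : ℂ) ^ ((0 : ZMod 2) * 0).val) = -1 := by norm_num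
    rw [e, sbk_LL, sbk_LL, smul_smul, add_comm m' m]
    congr 1
    ring
  have swapLG : ∀ (m n : ℤ), sbk (Ggen n) (Lgen m)
      = (-(-1 : ℂ) ^ ((0 : ZMod 2) * 1).val) • sbk (Lgen m) (Ggen n) := by
    intro m n
    have e : (-(-1 : ℂ) ^ ((0 : ZMod 2) * 1).val) = -1 := by norm_num
    rw [e, sbk_GL, sbk_LG, smul_smul]
    congr 1
    ring
  have swapGL : ∀ (n m : ℤ), sbk (Lgen m) (Ggen n)
      = (-(-1 : ℂ) ^ ((1 : ZMod 2) * 0).val) • sbk (Ggen n) (Lgen m) := by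
    intro n m
    have e : (-(-1 : ℂ) ^ ((1 : ZMod 2) * 0).val) = -1 := by norm_num
    rw [e, sbk_GL, sbk_LG, smul_smul]
    congr 1
    ring
  have swapGG : ∀ n p : ℤ, sbk (Ggen p) (Ggen n)
      = (-(-1 : ℂ) ^ ((1 : ZMod 2) * 1).val) • sbk (Ggen n) (Ggen p) := by
    intro n p
    have e : (-(-1 : ℂ) ^ ((1 : ZMod 2) * 1).val) = 1 := by
      have hv : ((1 : ZMod 2) * 1).val = 1 := by decide
      rw [hv]
      norm_num
    rw [e, one_smul, sbk_GG, sbk_GG, add_comm p n]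
  have resLL : ∀ m n : ℤ, φ (Lgen m) (Lgen n) = c • sbk (Lgen m) (Lgen n) := by
    intro m n
    by_cases hmn : m = n
    · subst hmn
      have hz : sbk (Lgen m) (Lgen m) = 0 := by
        rw [sbk_LL]
        simp
      rw [hz, smul_zero]
      have h := hskew 0 0 (Lgen m) (Lgen m) (Lgen_mem m) (Lgen_mem m)
      have e : (-(-1 : ℂ) ^ ((0 : ZMod 2) * 0).val) = -1 := by norm_num
      rw [e] at h
      exact eq_zero_of_eq_neg_one_smul h
    · obtain ⟨h1, -⟩ := main 0 0 (Lgen m) (Lgen n) (m : ℂ) (n : ℂ) (Lgen_mem m) (Lgen_mem n)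
        (sbkL0L m) (sbkL0L n) (hKL m) (hKL n) (swapLL m n)
      have hne : ((m : ℂ) - n) ≠ 0 := sub_ne_zero.mpr (by exact_mod_cast hmn)
      exact sub_eq_zero.mp ((smul_eq_zero.mp h1).resolve_left hne)
  have resLG : ∀ m n : ℤ, φ (Lgen m) (Ggen n) = c • sbk (Lgen m) (Ggen n) := by
    intro m n
    obtain ⟨h1, -⟩ := main 0 1 (Lgen m) (Ggen n) (m : ℂ) ((n : ℂ) + 1/2) (Lgen_mem m)
      (Ggen_mem n) (sbkL0L m) (sbkL0G n) (hKL m) (hKG n) (swapLG m n)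
    have hne : ((m : ℂ) - ((n : ℂ) + 1/2)) ≠ 0 := by
      intro hc
      have : ((2*m : ℤ) : ℂ) = ((2*n+1 : ℤ) : ℂ) := by push_cast; linear_combination 2*hc
      have := Int.cast_injective (α := ℂ) this
      omega
    exact sub_eq_zero.mp ((smul_eq_zero.mp h1).resolve_left hne)
  have resGL : ∀ n m : ℤ, φ (Ggen n) (Lgen m) = c • sbk (Ggen n) (Lgen m) := by
    intro n m
    obtain ⟨h1, -⟩ := main 1 0 (Ggen n) (Lgen m) ((n : ℂ) + 1/2) (m : ℂ) (Ggen_mem n)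
      (Lgen_mem m) (sbkL0G n) (sbkL0L m) (hKG n) (hKL m) (swapGL n m)
    have hne : (((n : ℂ) + 1/2) - (m : ℂ)) ≠ 0 := by
      intro hc
      have : ((2*n+1 : ℤ) : ℂ) = ((2*m : ℤ) : ℂ) := by push_cast; linear_combination 2*hc
      have := Int.cast_injective (α := ℂ) this
      omega
    exact sub_eq_zero.mp ((smul_eq_zero.mp h1).resolve_left hne)
  have resGGoff : ∀ n p : ℤ, n ≠ p → φ (Ggen n) (Ggen p) = c • sbk (Ggen n) (Ggen p) := by
    intro n p hnp
    obtain ⟨h1, -⟩ := main 1 1 (Ggen n) (Ggen p) ((n : ℂ) + 1/2) ((p : ℂ) + 1/2)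
      (Ggen_mem n) (Ggen_mem p) (sbkL0G n) (sbkL0G p) (hKG n) (hKG p) (swapGG n p)
    have hne : (((n : ℂ) + 1/2) - ((p : ℂ) + 1/2)) ≠ 0 := by
      intro hc
      have : ((n : ℤ) : ℂ) = ((p : ℤ) : ℂ) := by push_cast; linear_combination hc
      exact hnp (Int.cast_injective (α := ℂ) this)
    exact sub_eq_zero.mp ((smul_eq_zero.mp h1).resolve_left hne)
  have resGG : ∀ n p : ℤ, φ (Ggen n) (Ggen p) = c • sbk (Ggen n) (Ggen p) := by
    intro n p
    by_cases hnp : n = p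
    · subst hnp
      obtain ⟨-, hBB⟩ := main 1 1 (Ggen n) (Ggen n) ((n : ℂ) + 1/2) ((n : ℂ) + 1/2)
        (Ggen_mem n) (Ggen_mem n) (sbkL0G n) (sbkL0G n) (hKG n) (hKG n) (swapGG n n)
      have hXeig : sbk (Lgen 0) (φ (Ggen n) (Ggen n) - c • sbk (Ggen n) (Ggen n))
          = ((n : ℂ) + 1/2) • (φ (Ggen n) (Ggen n) - c • sbk (Ggen n) (Ggen n)) := by
        rw [sbk_sub_right, hBB, sbk_smul_right', sbk_GG, sbk_smul_right', sbkL0L]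
        have hc2 : ((n + n + 1 : ℤ) : ℂ) = 2 * n + 1 := by push_cast; ring
        rw [hc2]
        module
      have hX := eigen_G _ n hXeig
      have hXform : φ (Ggen n) (Ggen n) = c • sbk (Ggen n) (Ggen n)
          + ((φ (Ggen n) (Ggen n) - c • sbk (Ggen n) (Ggen n)).2 n) • Ggen n := by
        rw [← hX]
        abel
      have h := hR4 1 1 1 (Ggen n) (Ggen (n+1)) (Ggen n) (Ggen_mem n) (Ggen_mem (n+1))
        (Ggen_mem n)
      rw [hXform, sbk_GG (n+1) n, map_smul, resGL n (n+1+n+1),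
        resGGoff n (n+1) (by omega)] at h
      simp only [sbk_smul_left', sbk_smul_right', sbk_add_right', sbk_GG, sbk_GL,
        sbk_LG] at h
      have h2 := congrArg (fun z : SVirHalf => z.1 (n+1+n+1)) h
      simp only [Prod.smul_fst, Prod.fst_add, Finsupp.smul_apply, Finsupp.add_apply,
        smul_eq_mul, Ggen_fst, Lgen_fst_same, Finsupp.coe_zero, Pi.zero_apply,
        mul_zero, zero_add, add_zero, mul_one] at h2
      have hθ : (φ (Ggen n) (Ggen n) - c • sbk (Ggen n) (Ggen n)).2 n = 0 := by
        rw [sbk_GG]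
        have hs : ((-1 : ℂ) ^ ((d + 1) : ZMod 2).val) ≠ 0 := pow_ne_zero _ (by norm_num)
        rcases mul_eq_zero.mp h2.symm with h' | h'
        · exact absurd h' hs
        · rcases mul_eq_zero.mp h' with h'' | h''
          · exact h''
          · exact absurd h'' (by norm_num)
      rw [hXform, hθ, zero_smul, add_zero]
    · exact resGGoff n p hnp
  refine ⟨c, ?_⟩
  intro x y
  have hfin : φ = c • sbkBil := by
    refine hom_ext (M := SVirHalf →ₗ[ℂ] SVirHalf) _ _ ?_ ?_
    · intro m
      refine hom_ext (M := SVirHalf) _ _ ?_ ?_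
      · intro m'
        simpa using resLL m m'
      · intro n'
        simpa using resLG m n'
    · intro n
      refine hom_ext (M := SVirHalf) _ _ ?_ ?_
      · intro m'
        simpa using resGL n m'
      · intro n'
        simpa using resGG n n'
  rw [hfin]
  simp
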